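/- Let p be a prime and m, n positive natural numbers with p^(n-1) < m < p^n. Let V = Fin m → ZMod p, let A ∈ GL_m(ZMod p) be the Jordan block with eigenvalue 1 (entries 1 on the diagonal and first superdiagonal, 0 elsewhere), and let G be the semidirect product of the additive group V by the cyclic subgroup generated by A inside GL_m(ZMod p), where A acts on V by matrix-vector multiplication. Then the exponent of the group G is exactly p^n. -/

import Mathlib

/-- The nilpotent upper-triangular Jordan block: entry `(i,j)` is `1` if `j = i + 1`
and `0` otherwise. -/
def jordanNilp (p m : ℕ) : Matrix (Fin m) (Fin m) (ZMod p) :=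
  Matrix.of fun i j => if (j : ℕ) = (i : ℕ) + 1 then 1 else 0

/-- The additive automorphism of `V = Fin m → ZMod p` given by right matrix-vector
multiplication (`vecMul`) by an invertible matrix `g`, i.e. `v ↦ v · g`. -/
def vecMulAut {p m : ℕ} (g : GL (Fin m) (ZMod p)) : AddAut (Fin m → ZMod p) where
  toFun v := Matrix.vecMul v (g : Matrix (Fin m) (Fin m) (ZMod p))
  invFun v := Matrix.vecMul v ((↑(g⁻¹) : Matrix (Fin m) (Fin m) (ZMod p)))
  left_inv v := by simp [Matrix.vecMul_vecMul]
  right_inv v := by simp [Matrix.vecMul_vecMul]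
  map_add' u v := Matrix.add_vecMul (g : Matrix (Fin m) (Fin m) (ZMod p)) u v

set_option maxHeartbeats 1000000 in
/-- The action of the cyclic subgroup `⟨A⟩ = Subgroup.zpowers A` on the (multiplicative
version of the) additive group `V = Fin m → ZMod p`, a matrix acting by right
matrix-vector multiplication `v ↦ v · A`. -/
def holPhi {p m : ℕ} (A : GL (Fin m) (ZMod p)) :
    ↥(Subgroup.zpowers A) →* MulAut (Multiplicative (Fin m → ZMod p)) where
  toFun g := AddEquiv.toMultiplicative (vecMulAut (g : GL (Fin m) (ZMod p)))
  map_one' := by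
    ext v
    simp [vecMulAut, AddEquiv.toMultiplicative]
  map_mul' g h := by
    rw [show g * h = h * g from Subtype.ext (by
      obtain ⟨k, hk⟩ := Subgroup.mem_zpowers_iff.mp g.2
      obtain ⟨l, hl⟩ := Subgroup.mem_zpowers_iff.mp h.2
      rw [Subgroup.coe_mul, Subgroup.coe_mul, ← hk, ← hl]
      exact Commute.zpow_zpow_self A k l)]
    ext v
    simp [vecMulAut, AddEquiv.toMultiplicative, Matrix.vecMul_vecMul]
/-! The generator `A = 1 + N` has order `p ^ n`: in characteristic `p` we have
`A ^ p ^ e = 1 + N ^ p ^ e`, and `N ^ k ≠ 0` exactly when `k < m`. Conversely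
`(v, B) ^ t = (v · ∑_{i<t} B ^ i, B ^ t)`, and for `t = p ^ n` the geometric sum equals
`(B - 1) ^ (p ^ n - 1)` in characteristic `p`. As `B` is a power of `A`, `B - 1` is a multiple
of `N`, and `N ^ m = 0` with `m ≤ p ^ n - 1`, so every element has order dividing `p ^ n`. -/

open Finset Polynomial
open scoped Matrix

section Ring

variable {R : Type*} [Ring R]

theorem pow_sub_one_pow_eq_zero {x : R} {m : ℕ} (h : (x - 1) ^ m = 0) (k : ℕ) :
    (x ^ k - 1) ^ m = 0 := by
  have hc : Commute (∑ i ∈ range k, x ^ i) (x - 1) :=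
    Commute.sum_left _ _ _ fun i _ => ((Commute.refl x).sub_right (Commute.one_right x)).pow_left i
  rw [← geom_sum_mul, hc.mul_pow, h, mul_zero]

theorem geom_sum_prime_pow_eq_sub_one_pow (p n : ℕ) [Fact p.Prime] [Algebra (ZMod p) R] (x : R) :
    ∑ i ∈ range (p ^ n), x ^ i = (x - 1) ^ (p ^ n - 1) := by
  suffices hX : ∑ i ∈ range (p ^ n), (X : (ZMod p)[X]) ^ i = (X - 1) ^ (p ^ n - 1) by
    simpa using congrArg (aeval x) hX
  apply mul_right_cancel₀ (X_sub_C_ne_zero (1 : ZMod p))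
  rw [C_1, geom_sum_mul, ← pow_succ,
    Nat.sub_add_cancel (Nat.one_le_pow _ _ (Fact.out : p.Prime).pos), sub_pow_char_pow, one_pow]

end Ring

section Jordan

variable (p : ℕ) {m : ℕ}

theorem jordanNilp_pow_apply (k : ℕ) (i j : Fin m) :
    (jordanNilp p m ^ k) i j = if (j : ℕ) = i + k then 1 else 0 := by
  induction k generalizing i with
  | zero => simp [Matrix.one_apply, Fin.ext_iff, eq_comm]
  | succ k ih =>
    rw [pow_succ', Matrix.mul_apply]
    by_cases hi : (i : ℕ) + 1 < m
    · rw [sum_eq_single ⟨i + 1, hi⟩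
        (fun b _ hb => by simp [jordanNilp, Fin.ext_iff] at hb ⊢; omega) (by simp), ih]
      simp [jordanNilp, add_right_comm, add_assoc]
    · rw [sum_eq_zero (fun b _ => by simp [jordanNilp]; omega), if_neg (by omega)]

theorem jordanNilp_pow_eq_zero {k : ℕ} (h : m ≤ k) : jordanNilp p m ^ k = 0 := by
  ext i j
  rw [jordanNilp_pow_apply, if_neg (by omega), Matrix.zero_apply]

theorem jordanNilp_pow_ne_zero [Nontrivial (ZMod p)] {k : ℕ} (h : k < m) :
    jordanNilp p m ^ k ≠ 0 := fun h0 => by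
  simpa [jordanNilp_pow_apply] using congrFun (congrFun h0 ⟨0, by omega⟩) ⟨k, h⟩

theorem orderOf_one_add_jordanNilp [Fact p.Prime] {n : ℕ} (h1 : p ^ n < m)
    (h2 : m ≤ p ^ (n + 1)) :
    orderOf (1 + jordanNilp p m) = p ^ (n + 1) := by
  have : Nonempty (Fin m) := ⟨⟨0, by omega⟩⟩
  have hpow (e : ℕ) : (1 + jordanNilp p m) ^ p ^ e = 1 + jordanNilp p m ^ p ^ e := by
    rw [add_pow_char_pow_of_commute p e (Commute.one_left _), one_pow]
  apply orderOf_eq_prime_pow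
  · rw [hpow, add_eq_left]
    exact jordanNilp_pow_ne_zero p h1
  · rw [hpow, jordanNilp_pow_eq_zero p h2, add_zero]

end Jordan

namespace SemidirectProduct

variable {N G : Type*} [Group G]

theorem right_pow [Group N] {φ : G →* MulAut N} (g : N ⋊[φ] G) (t : ℕ) :
    (g ^ t).right = g.right ^ t :=
  map_pow rightHom g t

theorem left_pow [CommGroup N] {φ : G →* MulAut N} (g : N ⋊[φ] G) (t : ℕ) :
    (g ^ t).left = ∏ i ∈ range t, φ (g.right ^ i) g.left := by
  induction t with
  | zero => rfl
  | succ t ih => rw [pow_succ, mul_left, ih, right_pow, prod_range_succ]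

end SemidirectProduct

section Holomorph

variable {p m : ℕ} {A : GL (Fin m) (ZMod p)}
  (g : Multiplicative (Fin m → ZMod p) ⋊[holPhi A] ↥(Subgroup.zpowers A))

theorem toAdd_holPhi_pow_left (t : ℕ) :
    (g ^ t).left.toAdd = g.left.toAdd ᵥ*
      ∑ i ∈ range t,
        ((g.right : GL (Fin m) (ZMod p)) : Matrix (Fin m) (Fin m) (ZMod p)) ^ i := by
  rw [SemidirectProduct.left_pow, toAdd_prod]
  exact (map_sum (AddMonoidHom.mk' (g.left.toAdd ᵥ* ·) fun _ _ => Matrix.vecMul_add _ _ _)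
    _ _).symm

theorem holPhi_pow_eq_one {t : ℕ}
    (h : ∑ i ∈ range t, ((g.right : GL (Fin m) (ZMod p)) : Matrix (Fin m) (Fin m) (ZMod p)) ^ i
      = 0) :
    g ^ t = 1 := by
  ext : 1
  · simpa [h] using toAdd_holPhi_pow_left g t
  · rw [SemidirectProduct.right_pow]
    refine Subtype.ext (Units.ext ?_)
    rw [Subgroup.coe_pow, Units.val_pow_eq_pow_val, SemidirectProduct.one_right,
      OneMemClass.coe_one, Units.val_one, ← sub_eq_zero, ← geom_sum_mul, h, zero_mul]

end Holomorph

theorem exponent_holomorph_jordan_block_general (p m n : ℕ) [Fact p.Prime]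
    (hn : 0 < n) (h1 : p ^ (n - 1) < m) (h2 : m < p ^ n)
    (A : GL (Fin m) (ZMod p))
    (hA : (A : Matrix (Fin m) (Fin m) (ZMod p)) = 1 + jordanNilp p m) :
    Monoid.exponent (Multiplicative (Fin m → ZMod p) ⋊[holPhi A] ↥(Subgroup.zpowers A))
      = p ^ n := by
  obtain ⟨n, rfl⟩ : ∃ k, n = k + 1 := Nat.exists_eq_add_one.mpr hn
  rw [Nat.add_sub_cancel] at h1
  refine Nat.dvd_antisymm (Monoid.exponent_dvd_of_forall_pow_eq_one fun g => ?_) ?_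
  · obtain ⟨k, hk⟩ := mem_powers_iff_mem_zpowers.mpr g.right.2
    apply holPhi_pow_eq_one
    rw [geom_sum_prime_pow_eq_sub_one_pow, ← hk, Units.val_pow_eq_pow_val, hA]
    refine pow_eq_zero_of_le (show m ≤ p ^ (n + 1) - 1 by omega) (pow_sub_one_pow_eq_zero ?_ k)
    rw [add_sub_cancel_left, jordanNilp_pow_eq_zero p le_rfl]
  · calc p ^ (n + 1)
        = orderOf (SemidirectProduct.inr (φ := holPhi A) ⟨A, Subgroup.mem_zpowers A⟩) := by
          rw [orderOf_injective _ SemidirectProduct.inr_injective, Subgroup.orderOf_mk,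
            ← orderOf_units, hA, orderOf_one_add_jordanNilp p h1 h2.le]
      _ ∣ _ := Monoid.order_dvd_exponent _

theorem exponent_holomorph_jordan_block (p m n : ℕ) [Fact p.Prime]
    (hm : 0 < m) (hn : 0 < n) (h1 : p ^ (n - 1) < m) (h2 : m < p ^ n)
    (A : GL (Fin m) (ZMod p))
    (hA : (A : Matrix (Fin m) (Fin m) (ZMod p)) = 1 + jordanNilp p m) :
    Monoid.exponent (Multiplicative (Fin m → ZMod p) ⋊[holPhi A] ↥(Subgroup.zpowers A))
      = p ^ n :=
  exponent_holomorph_jordan_block_general p m n hn h1 h2 A hA
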